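/- (Theorem 3.1) Let A be an n-dimensional naturally graded p-filiform non-unital associative algebra over ℂ (p ≥ 1, n − p ≥ 2) with natural grading (𝒜_i), and let {e_1, …, e_{n−p}, f_1, …, f_p} be an adapted basis of A which is homogeneous, i.e. e_i ∈ 𝒜_i for 1 ≤ i ≤ n − p and f_j ∈ 𝒜_{r_j} for integers r_1 ≤ r_2 ≤ … ≤ r_p (r_j is the position of f_j in the natural gradation). Then r_s ≤ s for every s ∈ {1, 2, …, p}. -/
import Mathlib


variable (A : Type*) [NonUnitalRing A] [Module ℂ A] [SMulCommClass ℂ A A] [IsScalarTower ℂ A A]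

/-- Product of two submodules of a non-unital algebra: the span of all pairwise
products. In particular `pmul A ⊤ ⊤` is `A²`, the span of all products `x·y`. -/
def pmul (I J : Submodule ℂ A) : Submodule ℂ A :=
  Submodule.span ℂ (Set.image2 (· * ·) (I : Set A) (J : Set A))

/-- The series of powers `A^1 = A`, `A^{i+1} = Σ_{k=1}^{i} A^k · A^{i+1-k}`.
(`algPow A 0` is junk, set to `⊤`.) -/
def algPow : ℕ → Submodule ℂ A
  | 0 => ⊤
  | 1 => ⊤
  | n + 2 => ⨆ k : Fin (n + 1), pmul A (algPow (k + 1)) (algPow (n + 1 - k))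
  termination_by n => n
  decreasing_by
  · omega
  · omega

/-- An algebra is nilpotent if some power `A^m` (`m ≥ 1`) vanishes. -/
def IsNilpotentAlg : Prop :=
  ∃ m : ℕ, 1 ≤ m ∧ algPow A m = ⊥

/-- A natural grading of `A`: a family of submodules `𝒜 1, 𝒜 2, …` (with `𝒜 0 = ⊥`)
such that `A` is their internal direct sum, `𝒜 i · 𝒜 j ⊆ 𝒜 (i+j)` and
`𝒜 (i+1) = 𝒜 1 · 𝒜 i`. -/
structure IsNaturalGrading (𝒜 : ℕ → Submodule ℂ A) : Prop where
  zero : 𝒜 0 = ⊥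
  internal : DirectSum.IsInternal 𝒜
  mul_le : ∀ i j, 1 ≤ i → 1 ≤ j → pmul A (𝒜 i) (𝒜 j) ≤ 𝒜 (i + j)
  succ : ∀ i, 1 ≤ i → 𝒜 (i + 1) = pmul A (𝒜 1) (𝒜 i)

/-- `x ∈ A ∖ A²` realizes the characteristic sequence `(n-p, 1, …, 1)`:
the left multiplication `L_x` satisfies `L_x^{n-p-1} ≠ 0` and `rank L_x = n-p-1`. -/
def RealizesCharSeq (n p : ℕ) (x : A) : Prop :=
  x ∉ pmul A ⊤ ⊤ ∧ (LinearMap.mulLeft ℂ x) ^ (n - p - 1) ≠ 0 ∧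
    Module.finrank ℂ (LinearMap.range (LinearMap.mulLeft ℂ x)) = n - p - 1

/-- `A` is `p`-filiform: `C(A) = (n-p, 1, …, 1)`, i.e. some `x ∈ A ∖ A²` realizes the
characteristic sequence, and for every `y ∈ A ∖ A²` one has `L_y^{n-p} = 0` and, if
`L_y^{n-p-1} ≠ 0`, then `rank L_y = n-p-1`. -/
def IsPFiliform (n p : ℕ) : Prop :=
  (∃ x : A, RealizesCharSeq A n p x) ∧
    ∀ y : A, y ∉ pmul A ⊤ ⊤ →
      (LinearMap.mulLeft ℂ y) ^ (n - p) = 0 ∧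
        ((LinearMap.mulLeft ℂ y) ^ (n - p - 1) ≠ 0 →
          Module.finrank ℂ (LinearMap.range (LinearMap.mulLeft ℂ y)) = n - p - 1)

/-- An adapted basis `{e_1,…,e_{n-p}, f_1,…,f_p}` of a `p`-filiform algebra:
a basis with `e_1` realizing the characteristic sequence, `e_1 e_i = e_{i+1}` for
`1 ≤ i ≤ n-p-1`, `e_1 e_{n-p} = 0`, and `e_1 f_j = 0` for `1 ≤ j ≤ p`. -/
structure IsAdaptedBasis (n p : ℕ) (e f : ℕ → A) : Prop where
  indep : LinearIndependent ℂ
    (Sum.elim (fun i : Fin (n - p) => e (i.1 + 1)) (fun j : Fin p => f (j.1 + 1)))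
  span : Submodule.span ℂ (Set.range
    (Sum.elim (fun i : Fin (n - p) => e (i.1 + 1)) (fun j : Fin p => f (j.1 + 1)))) = ⊤
  char : RealizesCharSeq A n p (e 1)
  mul_e : ∀ i, 1 ≤ i → i ≤ n - p - 1 → e 1 * e i = e (i + 1)
  mul_last : e 1 * e (n - p) = 0
  mul_f : ∀ j, 1 ≤ j → j ≤ p → e 1 * f j = 0

/-- `s_i = dim 𝒜_i − 1` (truncated subtraction). -/
noncomputable def sdim (𝒜 : ℕ → Submodule ℂ A) (i : ℕ) : ℕ :=
  Module.finrank ℂ (𝒜 i) - 1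

/-- `S k = s_1 + ⋯ + s_k` (with `S 0 = 0`). -/
noncomputable def sSum (𝒜 : ℕ → Submodule ℂ A) (k : ℕ) : ℕ :=
  ∑ j ∈ Finset.Icc 1 k, sdim A 𝒜 j

/-- A homogeneous adapted basis: an adapted basis with `e_i ∈ 𝒜_i` for
`1 ≤ i ≤ n-p` and `f_{s_1+⋯+s_{i-1}+1}, …, f_{s_1+⋯+s_i} ∈ 𝒜_i` for `1 ≤ i ≤ n-p`. -/
structure IsHomogAdaptedBasis (n p : ℕ) (𝒜 : ℕ → Submodule ℂ A) (e f : ℕ → A) : Prop where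
  adapted : IsAdaptedBasis A n p e f
  e_mem : ∀ i, 1 ≤ i → i ≤ n - p → e i ∈ 𝒜 i
  f_mem : ∀ i, 1 ≤ i → i ≤ n - p →
    ∀ t, sSum A 𝒜 (i - 1) < t → t ≤ sSum A 𝒜 i → f t ∈ 𝒜 i

section Aux

lemma mem_pmul {I J : Submodule ℂ A} {x y : A} (hx : x ∈ I) (hy : y ∈ J) :
    x * y ∈ pmul A I J :=
  Submodule.subset_span (Set.mem_image2_of_mem hx hy)

lemma pmul_le {I J K : Submodule ℂ A} (h : ∀ x ∈ I, ∀ y ∈ J, x * y ∈ K) :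
    pmul A I J ≤ K :=
  Submodule.span_le.2 (Set.image2_subset_iff.2 h)

lemma pmul_bot (I : Submodule ℂ A) : pmul A I ⊥ = ⊥ := by
  refine le_bot_iff.1 (pmul_le A ?_)
  intro x _ y hy
  rw [Submodule.mem_bot] at hy ⊢
  rw [hy, mul_zero]

lemma e_mul_e (N : ℕ) (e : ℕ → A)
    (hmul : ∀ i, 1 ≤ i → i ≤ N - 1 → e 1 * e i = e (i + 1)) :
    ∀ a b, 1 ≤ a → 1 ≤ b → a + b ≤ N → e a * e b = e (a + b) := by
  intro a
  induction a with
  | zero => intro b h1 _ _; exact absurd h1 (by omega)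
  | succ a ih =>
    intro b h1 hb hab
    rcases Nat.eq_zero_or_pos a with ha | ha
    · subst ha
      simpa [show 0 + 1 + b = b + 1 by omega] using hmul b hb (by omega)
    · have h2 : e (a + 1) = e 1 * e a := (hmul a ha (by omega)).symm
      rw [h2, mul_assoc, ih b ha hb (by omega), hmul (a + b) (by omega) (by omega),
        show a + b + 1 = a + 1 + b by omega]

lemma e_mul_e_zero (N : ℕ) (e : ℕ → A)
    (hmul : ∀ i, 1 ≤ i → i ≤ N - 1 → e 1 * e i = e (i + 1))
    (hlast : e 1 * e N = 0) :
    ∀ a b, 1 ≤ a → 1 ≤ b → a + b = N + 1 → e a * e b = 0 := by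
  intro a b ha hb hab
  rcases Nat.lt_or_ge a 2 with ha2 | ha2
  · have : a = 1 := by omega
    subst this
    rw [show b = N by omega]
    exact hlast
  · have h2 : e a = e 1 * e (a - 1) := by
      rw [hmul (a - 1) (by omega) (by omega), show a - 1 + 1 = a by omega]
    rw [h2, mul_assoc, e_mul_e A N e hmul (a - 1) b (by omega) hb (by omega),
      show a - 1 + b = N by omega, hlast]

lemma chain_lemma (𝒜 : ℕ → Submodule ℂ A) (hgr : IsNaturalGrading A 𝒜)
    (N : ℕ) (e : ℕ → A)
    (hmul : ∀ i, 1 ≤ i → i ≤ N - 1 → e 1 * e i = e (i + 1))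
    (hlast : e 1 * e N = 0)
    (he1 : e 1 ∈ 𝒜 1)
    (s m : ℕ) (hs : 1 ≤ s) (hsm : s ≤ m) (hmN : m ≤ N)
    (hAs : 𝒜 s ≤ Submodule.span ℂ {e s}) :
    ∀ x ∈ 𝒜 1, x * e m ∈ Submodule.span ℂ {e 1 * e m} := by
  suffices h : ∀ d, d ≤ s - 1 → ∀ x ∈ 𝒜 (s - d), x * e (m + 1 - (s - d)) ∈
      Submodule.span ℂ {e 1 * e m} by
    intro x hx
    have := h (s - 1) le_rfl x (by rwa [show s - (s - 1) = 1 by omega])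
    rwa [show s - (s - 1) = 1 by omega, show m + 1 - 1 = m by omega] at this
  intro d
  induction d with
  | zero =>
    intro _ x hx
    rw [Nat.sub_zero] at hx ⊢
    obtain ⟨c, rfl⟩ := Submodule.mem_span_singleton.1 (hAs hx)
    rw [smul_mul_assoc]
    have hkey : e s * e (m + 1 - s) = e 1 * e m := by
      rcases Nat.lt_or_ge m N with hm | hm
      · rw [e_mul_e A N e hmul s (m + 1 - s) hs (by omega) (by omega),
          show s + (m + 1 - s) = m + 1 by omega, hmul m (by omega) (by omega)]
      · have hmN' : m = N := by omega
        rw [hmN', e_mul_e_zero A N e hmul hlast s (N + 1 - s) hs (by omega) (by omega), hlast]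
    rw [hkey]
    exact Submodule.smul_mem _ c (Submodule.mem_span_singleton_self _)
  | succ d ih =>
    intro hd x hx
    have hk1 : 1 ≤ s - (d + 1) := by omega
    have h4 : e (m + 1 - (s - (d + 1))) = e 1 * e (m - (s - (d + 1))) := by
      rw [hmul (m - (s - (d + 1))) (by omega) (by omega)]
      congr 1
      omega
    rw [h4, ← mul_assoc]
    have hx1 : x * e 1 ∈ 𝒜 (s - (d + 1) + 1) :=
      hgr.mul_le (s - (d + 1)) 1 hk1 le_rfl (mem_pmul A hx he1)
    have hx2 : x * e 1 ∈ 𝒜 (s - d) := by rwa [show s - (d + 1) + 1 = s - d by omega] at hx1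
    have := ih (by omega) (x * e 1) hx2
    rwa [show m + 1 - (s - d) = m - (s - (d + 1)) by omega] at this

end Aux

/-- Theorem 3.1: for an `n`-dimensional naturally graded `p`-filiform
complex associative algebra with homogeneous adapted basis
`{e_1,…,e_{n-p}, f_1,…,f_p}`, where `f_j ∈ 𝒜_{r_j}` with `r_1 ≤ ⋯ ≤ r_p`,
one has `r_s ≤ s` for every `1 ≤ s ≤ p`. -/
theorem position_le (n p : ℕ) (hp : 1 ≤ p) (hnp : 2 ≤ n - p)
    [FiniteDimensional ℂ A] (hdim : Module.finrank ℂ A = n)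
    (hnil : IsNilpotentAlg A)
    (𝒜 : ℕ → Submodule ℂ A) (hgr : IsNaturalGrading A 𝒜)
    (hpf : IsPFiliform A n p)
    (e f : ℕ → A) (hbasis : IsAdaptedBasis A n p e f)
    (he : ∀ i, 1 ≤ i → i ≤ n - p → e i ∈ 𝒜 i)
    (r : ℕ → ℕ)
    (hr1 : ∀ j, 1 ≤ j → j ≤ p → 1 ≤ r j)
    (hrmono : ∀ j j', 1 ≤ j → j ≤ j' → j' ≤ p → r j ≤ r j')
    (hf : ∀ j, 1 ≤ j → j ≤ p → f j ∈ 𝒜 (r j)) :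
    ∀ s, 1 ≤ s → s ≤ p → r s ≤ s := by
  intro s
  induction s using Nat.strong_induction_on with
  | _ s ih =>
  intro hs1 hsp
  by_contra hcon
  push_neg at hcon
  -- notation
  set N := n - p with hN
  have hmul : ∀ i, 1 ≤ i → i ≤ N - 1 → e 1 * e i = e (i + 1) := hbasis.mul_e
  have hlast : e 1 * e N = 0 := hbasis.mul_last
  have he1 : e 1 ∈ 𝒜 1 := he 1 le_rfl (by omega)
  set v : (Fin N ⊕ Fin p) → A :=
    Sum.elim (fun i : Fin N => e (i.1 + 1)) (fun j : Fin p => f (j.1 + 1)) with hv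
  -- no f_j has degree s
  have hrne : ∀ j, 1 ≤ j → j ≤ p → r j ≠ s := by
    intro j hj1 hjp
    rcases Nat.lt_or_ge j s with h | h
    · have := ih j h hj1 (by omega)
      omega
    · have := hrmono s j hs1 h hjp
      omega
  -- f s ≠ 0
  have hfs_ne : f s ≠ 0 := by
    have h0 := hbasis.indep.ne_zero (Sum.inr ⟨s - 1, by omega⟩)
    simpa [show s - 1 + 1 = s by omega] using h0
  -- the corner submodule
  set U : Submodule ℂ A := ⨆ (d) (_ : d ≠ s), 𝒜 d with hU
  have hUmem : ∀ d, d ≠ s → 𝒜 d ≤ U := fun d hd => le_iSup₂ (f := fun d _ => 𝒜 d) d hd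
  have hdisj : Disjoint (𝒜 s) U := hgr.internal.submodule_iSupIndep s
  -- zeros propagate upwards
  have hprop : ∀ k, 1 ≤ k → 𝒜 k = ⊥ → ∀ k', k ≤ k' → 𝒜 k' = ⊥ := by
    intro k hk hbot k'
    refine Nat.le_induction hbot ?_ k'
    intro m hm hbm
    rw [hgr.succ m (by omega), hbm, pmul_bot]
  rcases Nat.lt_or_ge N s with hsN | hsN
  · -- case s > N : 𝒜 s = ⊥, propagate, f s = 0
    have htop : (⊤ : Submodule ℂ A) ≤ U := by
      rw [← hbasis.span]
      refine Submodule.span_le.2 ?_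
      rintro _ ⟨i, rfl⟩
      cases i with
      | inl i => exact hUmem (i.1 + 1) (by have := i.2; omega) (he (i.1 + 1) (by omega) (by omega))
      | inr j =>
        exact hUmem (r (j.1 + 1)) (hrne (j.1 + 1) (by omega) (by omega))
          (hf (j.1 + 1) (by omega) (by omega))
    have hAbot : 𝒜 s = ⊥ := by
      refine le_bot_iff.1 ?_
      intro x hx
      exact (disjoint_iff_inf_le.1 hdisj) ⟨hx, htop Submodule.mem_top⟩
    have : 𝒜 (r s) = ⊥ := hprop s hs1 hAbot (r s) (by omega)
    exact hfs_ne ((Submodule.mem_bot ℂ).1 (this ▸ hf s hs1 hsp))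
  · -- case s ≤ N
    have hesA : Submodule.span ℂ {e s} ≤ 𝒜 s :=
      (Submodule.span_singleton_le_iff_mem _ _).2 (he s hs1 hsN)
    have htop : (⊤ : Submodule ℂ A) ≤ Submodule.span ℂ {e s} ⊔ U := by
      rw [← hbasis.span]
      refine Submodule.span_le.2 ?_
      rintro _ ⟨i, rfl⟩
      cases i with
      | inl i =>
        by_cases his : i.1 + 1 = s
        · exact Submodule.mem_sup_left (his ▸ Submodule.mem_span_singleton_self _)
        · exact Submodule.mem_sup_right
            (hUmem (i.1 + 1) his (he (i.1 + 1) (by omega) (by omega)))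
      | inr j =>
        exact Submodule.mem_sup_right (hUmem (r (j.1 + 1))
          (hrne (j.1 + 1) (by omega) (by omega)) (hf (j.1 + 1) (by omega) (by omega)))
    have hAs : 𝒜 s ≤ Submodule.span ℂ {e s} := by
      have h1 : 𝒜 s = (Submodule.span ℂ {e s} ⊔ U) ⊓ 𝒜 s :=
        le_antisymm (le_inf (le_trans le_top htop) le_rfl) inf_le_right
      rw [sup_inf_assoc_of_le U hesA, disjoint_iff.1 hdisj.symm, sup_bot_eq] at h1
      exact h1.le
    -- upward induction: 𝒜 k ≤ span{e k} for s ≤ k ≤ min N (r s)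
    have hup : ∀ k, s ≤ k → k ≤ min N (r s) → 𝒜 k ≤ Submodule.span ℂ {e k} := by
      intro k hk
      refine Nat.le_induction (fun _ => hAs) ?_ k hk
      intro m hm ihm hm2
      have hmN : m ≤ N - 1 := by omega
      rw [hgr.succ m (by omega)]
      refine pmul_le A ?_
      intro x hx y hy
      obtain ⟨c, rfl⟩ := Submodule.mem_span_singleton.1 (ihm (by omega) hy)
      rw [mul_smul_comm]
      refine Submodule.smul_mem _ c ?_
      have := chain_lemma A 𝒜 hgr N e hmul hlast he1 s m hs1 (by omega) (by omega) hAs x hx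
      rwa [hmul m (by omega) hmN] at this
    rcases Nat.lt_or_ge N (r s) with hrN | hrN
    · -- r s > N : 𝒜 (N+1) = ⊥, propagate
      have hAN : 𝒜 N ≤ Submodule.span ℂ {e N} := hup N hsN (by omega)
      have hbot : 𝒜 (N + 1) = ⊥ := by
        refine le_bot_iff.1 ?_
        rw [hgr.succ N (by omega)]
        refine pmul_le A ?_
        intro x hx y hy
        obtain ⟨c, rfl⟩ := Submodule.mem_span_singleton.1 (hAN hy)
        rw [mul_smul_comm]
        have := chain_lemma A 𝒜 hgr N e hmul hlast he1 s N hs1 hsN le_rfl hAs x hx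
        rw [hlast, Submodule.span_zero_singleton, Submodule.mem_bot] at this
        rw [this, smul_zero]
        exact Submodule.zero_mem _
      have : 𝒜 (r s) = ⊥ := hprop (N + 1) (by omega) hbot (r s) (by omega)
      exact hfs_ne ((Submodule.mem_bot ℂ).1 (this ▸ hf s hs1 hsp))
    · -- r s ≤ N : f s ∈ span {e (r s)}, contradiction with independence
      have hfs : f s ∈ Submodule.span ℂ {e (r s)} :=
        hup (r s) (by omega) (by omega) (hf s hs1 hsp)
      have hnot := hbasis.indep.notMem_span_image
        (s := {Sum.inl ⟨r s - 1, by omega⟩}) (x := Sum.inr ⟨s - 1, by omega⟩) (by simp)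
      rw [Set.image_singleton] at hnot
      apply hnot
      simp only [Sum.elim_inl, Sum.elim_inr, hv]
      rwa [show s - 1 + 1 = s by omega, show r s - 1 + 1 = r s by omega]
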